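/- The translation (·)ⁿ from the call-by-name probabilistic λ-calculus Λ⊕^cbn into the probabilistic linear λ-calculus Λ⊕^! (Girard's call-by-name translation with xⁿ = x, (λx.M)ⁿ = λ!x.Mⁿ, (MN)ⁿ = Mⁿ !Nⁿ, (M⊕N)ⁿ = Mⁿ ⊕ Nⁿ) maps surface contexts and ⊕-redexes to surface contexts and ⊕-redexes: M = S(R₁⊕R₂) for a cbn surface context S if and only if Mⁿ = T(U₁⊕U₂) for a surface context T of Λ⊕^!, and moreover (S(R_i))ⁿ = T(U_i) for i ∈ {1,2}. -/

import Mathlib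

open scoped NNReal ENNReal

/-- A (raw) multidistribution on `X`: a finite multiset of weighted elements. -/
abbrev MDist (X : Type) := Multiset (ℝ≥0 × X)

namespace MDist

/-- Scalar multiplication of a multidistribution. -/
def scale {X : Type} (p : ℝ≥0) (m : MDist X) : MDist X :=
  m.map fun q => (p * q.1, q.2)

/-- The singleton multidistribution `[1 M]`. -/
def single {X : Type} (M : X) : MDist X := {(1, M)}

/-- A multidistribution is proper when every weight lies in `(0,1]` and the
weights sum to at most `1`. -/
def Proper {X : Type} (m : MDist X) : Prop :=
  (∀ q ∈ m, 0 < q.1 ∧ q.1 ≤ 1) ∧ (m.map Prod.fst).sum ≤ 1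

/-- The probability that the distribution associated to a multidistribution
assigns to an event `A`. -/
noncomputable def mass {X : Type} (m : MDist X) (A : Set X) : ℝ≥0∞ :=
  (m.map fun q => A.indicator (fun _ => (q.1 : ℝ≥0∞)) q.2).sum

end MDist

/-- One component of the lifting: either keep the term or perform a step. -/
def LiftTerm {X : Type} (r : X → MDist X → Prop) (M : X) (m : MDist X) : Prop :=
  m = MDist.single M ∨ r M m

/-- The lifting of a relation `r ⊆ X × MDist X` to a binary relation on
multidistributions. -/
inductive Lift {X : Type} (r : X → MDist X → Prop) : MDist X → MDist X → Prop
  | nil : Lift r 0 0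
  | cons {p : ℝ≥0} {M : X} {m s t : MDist X} :
      LiftTerm r M m → Lift r s t → Lift r ((p, M) ::ₘ s) (MDist.scale p m + t)

/-- Terms of the probabilistic linear λ-calculus `Λ⊕^!`
(de Bruijn representation). -/
inductive LTm : Type
  | var : ℕ → LTm
  | bang : LTm → LTm
  | lam : LTm → LTm
  | lamb : LTm → LTm      -- the non-linear abstraction λ!x.M
  | app : LTm → LTm → LTm
  | choice : LTm → LTm → LTm
deriving DecidableEq

namespace LTm

def liftAux (c : ℕ) : LTm → LTm
  | var k => if k < c then var k else var (k + 1)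
  | bang M => bang (liftAux c M)
  | lam M => lam (liftAux (c + 1) M)
  | lamb M => lamb (liftAux (c + 1) M)
  | app M N => app (liftAux c M) (liftAux c N)
  | choice M N => choice (liftAux c M) (liftAux c N)

def subst : LTm → ℕ → LTm → LTm
  | var k, j, N => if k = j then N else if j < k then var (k - 1) else var k
  | bang M, j, N => bang (subst M j N)
  | lam M, j, N => lam (subst M (j + 1) (liftAux 0 N))
  | lamb M, j, N => lamb (subst M (j + 1) (liftAux 0 N))
  | app M P, j, N => app (subst M j N) (subst P j N)
  | choice M P, j, N => choice (subst M j N) (subst P j N)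

/-- Number of free occurrences of the variable `j`. -/
def cnt (j : ℕ) : LTm → ℕ
  | var k => if k = j then 1 else 0
  | bang M => cnt j M
  | lam M => cnt (j + 1) M
  | lamb M => cnt (j + 1) M
  | app M N => cnt j M + cnt j N
  | choice M N => cnt j M + cnt j N

/-- Number of free occurrences of the variable `j` not under a `!`. -/
def cntS (j : ℕ) : LTm → ℕ
  | var k => if k = j then 1 else 0
  | bang _ => 0
  | lam M => cntS (j + 1) M
  | lamb M => cntS (j + 1) M
  | app M N => cntS j M + cntS j N
  | choice M N => cntS j M + cntS j N

/-- Affine terms: for every (linear) subterm `λx.P`, `x` occurs free at most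
once in `P`, and not within the scope of a `!`. -/
def Affine : LTm → Prop
  | var _ => True
  | bang M => Affine M
  | lam M => Affine M ∧ cnt 0 M ≤ 1 ∧ cntS 0 M = cnt 0 M
  | lamb M => Affine M
  | app M N => Affine M ∧ Affine N
  | choice M N => Affine M ∧ Affine N

/-- β-reduction of `Λ⊕^!`, closed under arbitrary contexts. -/
inductive BetaStep : LTm → LTm → Prop
  | beta {M N : LTm} : BetaStep (app (lam M) N) (subst M 0 N)
  | betaBang {M N : LTm} : BetaStep (app (lamb M) (bang N)) (subst M 0 N)
  | appL {M M' N : LTm} : BetaStep M M' → BetaStep (app M N) (app M' N)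
  | appR {M N N' : LTm} : BetaStep N N' → BetaStep (app M N) (app M N')
  | lam {M M' : LTm} : BetaStep M M' → BetaStep (lam M) (lam M')
  | lamb {M M' : LTm} : BetaStep M M' → BetaStep (lamb M) (lamb M')
  | bang {M M' : LTm} : BetaStep M M' → BetaStep (bang M) (bang M')
  | chL {M M' N : LTm} : BetaStep M M' → BetaStep (choice M N) (choice M' N)
  | chR {M N N' : LTm} : BetaStep N N' → BetaStep (choice M N) (choice M N')

/-- `PlusStep M A B` holds when `M = S(P ⊕ Q)`, `A = S(P)`, `B = S(Q)` for a
surface context `S ::= □ | MS | SM | λx.S | λ!x.S` (no hole under `!` or `⊕`). -/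
inductive PlusStep : LTm → LTm → LTm → Prop
  | choice {M N : LTm} : PlusStep (choice M N) M N
  | appL {M A B N : LTm} : PlusStep M A B → PlusStep (app M N) (app A N) (app B N)
  | appR {M N A B : LTm} : PlusStep N A B → PlusStep (app M N) (app M A) (app M B)
  | lam {M A B : LTm} : PlusStep M A B → PlusStep (lam M) (lam A) (lam B)
  | lamb {M A B : LTm} : PlusStep M A B → PlusStep (lamb M) (lamb A) (lamb B)

end LTm

/-- The reduction `→_β ⊆ Λ⊕^! × MDST(Λ⊕^!)`. -/
def lbetaRed (M : LTm) (m : MDist LTm) : Prop :=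
  ∃ N, LTm.BetaStep M N ∧ m = MDist.single N

/-- The probabilistic reduction `→⊕ ⊆ Λ⊕^! × MDST(Λ⊕^!)`. -/
def lplusRed (M : LTm) (m : MDist LTm) : Prop :=
  ∃ A B, LTm.PlusStep M A B ∧ m = {((1 : ℝ≥0) / 2, A), ((1 : ℝ≥0) / 2, B)}

/-- Terms of `Λ⊕^cbn` (de Bruijn representation). -/
inductive Term : Type
  | var : ℕ → Term
  | lam : Term → Term
  | app : Term → Term → Term
  | choice : Term → Term → Term
deriving DecidableEq

namespace Term

/-- `CbnPlus M A B` holds when `M = S(R₁ ⊕ R₂)`, `A = S(R₁)`, `B = S(R₂)` for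
a cbn surface context `S ::= □ | λx.S | S M`. -/
inductive CbnPlus : Term → Term → Term → Prop
  | choice {M N : Term} : CbnPlus (choice M N) M N
  | lam {M A B : Term} : CbnPlus M A B → CbnPlus (lam M) (lam A) (lam B)
  | appL {M A B N : Term} : CbnPlus M A B → CbnPlus (app M N) (app A N) (app B N)

end Term

/-- Girard's call-by-name translation `(·)ⁿ : Λ⊕^cbn → Λ⊕^!`. -/
def trN : Term → LTm
  | Term.var k => LTm.var k
  | Term.lam M => LTm.lamb (trN M)
  | Term.app M N => LTm.app (trN M) (LTm.bang (trN N))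
  | Term.choice M N => LTm.choice (trN M) (trN N)

/-! The translation commutes with the surface constructors (`λx.S ↦ λ!x.Sⁿ`, `S M ↦ Sⁿ !Mⁿ`),
so cbn surface ⊕-decompositions translate to linear ones. Conversely, a linear surface context
never enters an argument of an application, since every argument of a translated term is a
`!`-box, and it cannot descend into that box; hence it comes from a cbn surface context. -/

theorem Term.CbnPlus.plusStep_trN {M A B : Term} (h : Term.CbnPlus M A B) :
    LTm.PlusStep (trN M) (trN A) (trN B) := by
  induction h with
  | choice => exact .choice
  | lam _ ih => exact .lamb ih
  | appL _ ih => exact .appL ih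

theorem LTm.not_plusStep_bang {M A B : LTm} : ¬ LTm.PlusStep (.bang M) A B :=
  nofun

theorem LTm.PlusStep.exists_cbnPlus_of_trN {M : Term} {A' B' : LTm}
    (h : LTm.PlusStep (trN M) A' B') :
    ∃ A B : Term, A' = trN A ∧ B' = trN B ∧ Term.CbnPlus M A B := by
  induction M generalizing A' B' with
  | var _ => cases h
  | lam M ih =>
    cases h with
    | lamb h =>
      obtain ⟨A, B, rfl, rfl, hAB⟩ := ih h
      exact ⟨.lam A, .lam B, rfl, rfl, .lam hAB⟩
  | app M N ihM _ =>
    cases h with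
    | appL h =>
      obtain ⟨A, B, rfl, rfl, hAB⟩ := ihM h
      exact ⟨.app A N, .app B N, rfl, rfl, .appL hAB⟩
    | appR h => exact absurd h LTm.not_plusStep_bang
  | choice M N =>
    cases h with
    | choice => exact ⟨M, N, rfl, rfl, .choice⟩

/-- The cbn translation maps surface ⊕-decompositions to surface
⊕-decompositions, and conversely: `M = S(R₁⊕R₂)` with branches `A, B` iff
`Mⁿ = T(U₁⊕U₂)` with branches `Aⁿ, Bⁿ`. -/
theorem cbn_translation_preserves_surface (M : Term) :
    (∀ A B : Term, Term.CbnPlus M A B → LTm.PlusStep (trN M) (trN A) (trN B)) ∧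
    (∀ A' B' : LTm, LTm.PlusStep (trN M) A' B' →
      ∃ A B : Term, A' = trN A ∧ B' = trN B ∧ Term.CbnPlus M A B) :=
  ⟨fun _ _ h => h.plusStep_trN, fun _ _ h => h.exists_cbnPlus_of_trN⟩
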